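/- Let $V$ and $\mathfrak{a}$ be finite-dimensional vector spaces over $\mathbb{Q}$, and let $\varphi^1_1,\dots,\varphi^1_{k_1}, \varphi^2_1,\dots,\varphi^2_{k_2} \in \mathfrak{a}^*$ and $\chi^1_1,\dots,\chi^1_{k_1}, \chi^2_1,\dots,\chi^2_{k_2} \in V^*$. For $l=1,2$ and $v \in V \otimes_{\mathbb{Q}} \mathbb{R}$ define the polyhedron $P^l(v) = \{\lambda \in \mathfrak{a} \otimes \mathbb{R} \mid \langle \varphi^l_i, \lambda\rangle \geq -\chi^l_i(v) \text{ for } i = 1,\dots,k_l\}$ (functionals extended by scalars). Suppose there exists $v \in V \otimes \mathbb{R}$ such that $P^1(v) = P^2(v)$ and this set is a polytope of dimension equal to $\dim \mathfrak{a}$. Then for every neighborhood $O$ of $v$ in $V \otimes \mathbb{R}$ there exists a rational point $v' \in O \cap V$ with $P^1(v') = P^2(v')$. -/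

import Mathlib

/-!
For a single inequality `⟨φ, λ⟩ ≥ -χ(u)`, Fourier–Motzkin elimination of `λ` from the system
"`λ ∈ P¹(u)` and `λ` violates the inequality" shows that the set of parameters `u` for which
`P¹(u)` satisfies the inequality is a finite union of rational open or closed half-spaces through
the origin. Choosing, for every inequality of `P²` and of `P¹`, one such half-space containing `v`
gives finitely many rational homogeneous inequalities, strict or not, which hold at `v` and on
whose solution set `P¹ = P²`. Those that are strict at `v` still hold near `v`; the others are
equalities at `v`, and rational points are dense in the rational subspace they cut out.
-/

open Filter Finset Topology

def Ineq {α : Type*} [Zero α] [Preorder α] (strict : Bool) (t : α) : Prop :=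
  if strict then 0 < t else 0 ≤ t

namespace Ineq

section Preorder

variable {α : Type*} [Zero α] [Preorder α] {s : Bool} {t : α}

@[simp] lemma true_iff : Ineq true t ↔ 0 < t := Iff.rfl

@[simp] lemma false_iff : Ineq false t ↔ 0 ≤ t := Iff.rfl

lemma nonneg (h : Ineq s t) : 0 ≤ t := by
  cases s
  · exact h
  · exact le_of_lt h

lemma of_pos (h : 0 < t) : Ineq s t := by
  cases s
  · exact h.le
  · exact h

lemma zero_iff : Ineq s (0 : α) ↔ s = false := by
  cases s <;> simp

lemma of_or_right {s' : Bool} (h : Ineq (s || s') t) : Ineq s' t := by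
  cases s <;> cases s'
  all_goals first | exact h | exact of_pos h

end Preorder

variable {𝕜 : Type*} [Field 𝕜] [LinearOrder 𝕜] [IsStrictOrderedRing 𝕜] {s s' : Bool} {t t' c : 𝕜}

lemma add (h : Ineq s t) (h' : Ineq s' t') : Ineq (s || s') (t + t') := by
  cases s <;> cases s' <;> simp only [Bool.or_true, Bool.or_false, true_iff, false_iff] at * <;>
    positivity

lemma mul_left (hc : 0 < c) (h : Ineq s t) : Ineq s (c * t) := by
  cases s
  · exact mul_nonneg hc.le h
  · exact mul_pos hc h

lemma convex (s : Bool) : Convex 𝕜 {t : 𝕜 | Ineq s t} := by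
  cases s
  · exact convex_Ici 0
  · exact convex_Ioi 0

end Ineq

section Elimination

variable {𝕜 : Type*} [Field 𝕜] [LinearOrder 𝕜] [IsStrictOrderedRing 𝕜]

lemma not_ineq {s : Bool} {t : 𝕜} : ¬Ineq s t ↔ Ineq (!s) (-t) := by
  cases s <;> simp

lemma eventually_ineq_atTop {s : Bool} {A c : 𝕜} (hc : 0 ≤ c) (h0 : c = 0 → Ineq s A) :
    ∀ᶠ y in atTop, Ineq s (A + c * y) := by
  rcases hc.eq_or_lt with rfl | hc
  · exact Eventually.of_forall fun y => by simpa using h0 rfl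
  · exact (tendsto_atTop_add_const_left _ A (tendsto_id.const_mul_atTop hc)).eventually
      ((eventually_gt_atTop 0).mono fun _ => Ineq.of_pos)

lemma eventually_ineq_atBot {s : Bool} {A c : 𝕜} (hc : c ≤ 0) (h0 : c = 0 → Ineq s A) :
    ∀ᶠ y in atBot, Ineq s (A + c * y) := by
  have := tendsto_neg_atBot_atTop.eventually
    (eventually_ineq_atTop (neg_nonneg.2 hc) fun h => h0 (neg_eq_zero.1 h))
  simpa using this

lemma exists_ineq_of_neg_of_pos {s₁ s₂ : Bool} {A₁ A₂ c₁ c₂ : 𝕜} (h₁ : c₁ < 0) (h₂ : 0 < c₂)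
    (h : Ineq (s₁ || s₂) (c₂ * A₁ - c₁ * A₂)) :
    ∃ y, Ineq s₁ (A₁ + c₁ * y) ∧ Ineq s₂ (A₂ + c₂ * y) := by
  -- the midpoint of the two endpoints `A₁ / -c₁` and `-A₂ / c₂`
  have := h₁.ne
  have := h₂.ne'
  refine ⟨(A₁ * c₂ + A₂ * c₁) / (-2 * c₁ * c₂), ?_, ?_⟩
  · have e : A₁ + c₁ * ((A₁ * c₂ + A₂ * c₁) / (-2 * c₁ * c₂))
        = (2 * c₂)⁻¹ * (c₂ * A₁ - c₁ * A₂) := by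
      field_simp; ring
    rw [e]
    exact (Ineq.of_or_right (by rwa [Bool.or_comm] at h)).mul_left (by positivity)
  · have e : A₂ + c₂ * ((A₁ * c₂ + A₂ * c₁) / (-2 * c₁ * c₂))
        = (-2 * c₁)⁻¹ * (c₂ * A₁ - c₁ * A₂) := by
      field_simp; ring
    rw [e]
    exact h.of_or_right.mul_left (inv_pos.2 (by linarith))

variable {ι : Type*}

lemma exists_ineq_and_ineq {A c : ι → 𝕜} {s : ι → Bool} (h0 : ∀ i, c i = 0 → Ineq (s i) (A i))
    (hpair : ∀ i j, c i < 0 → 0 < c j → Ineq (s i || s j) (c j * A i - c i * A j)) (i j : ι) :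
    ∃ y, Ineq (s i) (A i + c i * y) ∧ Ineq (s j) (A j + c j * y) := by
  wlog hij : c i ≤ c j generalizing i j
  · obtain ⟨y, hi, hj⟩ := this j i (le_of_not_ge hij)
    exact ⟨y, hj, hi⟩
  rcases le_or_gt 0 (c i) with hi | hi
  · exact ((eventually_ineq_atTop hi (h0 i)).and
      (eventually_ineq_atTop (hi.trans hij) (h0 j))).exists
  rcases le_or_gt (c j) 0 with hj | hj
  · exact ((eventually_ineq_atBot (hij.trans hj) (h0 i)).and
      (eventually_ineq_atBot hj (h0 j))).exists
  exact exists_ineq_of_neg_of_pos hi hj (hpair i j hi hj)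

/-- Fourier–Motzkin elimination of one variable. -/
theorem exists_forall_ineq_iff [Fintype ι] (A c : ι → 𝕜) (s : ι → Bool) :
    (∃ y, ∀ i, Ineq (s i) (A i + c i * y)) ↔
      (∀ i, c i = 0 → Ineq (s i) (A i)) ∧
        ∀ i j, c i < 0 → 0 < c j → Ineq (s i || s j) (c j * A i - c i * A j) := by
  constructor
  · rintro ⟨y, hy⟩
    refine ⟨fun i hi => by simpa [hi] using hy i, fun i j hi hj => ?_⟩
    convert ((hy i).mul_left hj).add ((hy j).mul_left (neg_pos.2 hi)) using 1
    ring
  rintro ⟨h0, hpair⟩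
  classical
  -- in dimension one, Helly's theorem reduces the problem to pairs of constraints
  set F : ι → Set 𝕜 := fun i => {y | Ineq (s i) (A i + c i * y)}
  have hF : ∀ i ∈ (univ : Finset ι), Convex 𝕜 (F i) := fun i _ =>
    (Ineq.convex (s i)).affine_preimage (AffineMap.const 𝕜 𝕜 (A i) + c i • AffineMap.id 𝕜 𝕜)
  have hpair' : ∀ i j, ∃ y, y ∈ F i ∧ y ∈ F j := exists_ineq_and_ineq h0 hpair
  obtain ⟨y, hy⟩ := Convex.helly_theorem' hF fun I _ hI => by
    rw [Module.finrank_self] at hI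
    obtain h | h | h : #I = 0 ∨ #I = 1 ∨ #I = 2 := by omega
    · simp [card_eq_zero.1 h]
    · obtain ⟨i, rfl⟩ := card_eq_one.1 h
      obtain ⟨y, hy, -⟩ := hpair' i i
      exact ⟨y, by simpa using hy⟩
    · obtain ⟨i, j, -, rfl⟩ := card_eq_two.1 h
      obtain ⟨y, hy⟩ := hpair' i j
      exact ⟨y, by simpa using hy⟩
  exact ⟨y, by simpa [F] using hy⟩

end Elimination

section RatDot

def ratDot {α : Type*} [Fintype α] (a : α → ℚ) (x : α → ℝ) : ℝ := ∑ j, (a j : ℝ) * x j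

variable {α : Type*} [Fintype α]

@[simp] lemma ratDot_sub (a b : α → ℚ) (x : α → ℝ) :
    ratDot (a - b) x = ratDot a x - ratDot b x := by
  simp [ratDot, sub_mul]

@[simp] lemma ratDot_neg (a : α → ℚ) (x : α → ℝ) : ratDot (-a) x = -ratDot a x := by
  simp [ratDot]

@[simp] lemma ratDot_smul (q : ℚ) (a : α → ℚ) (x : α → ℝ) :
    ratDot (q • a) x = q * ratDot a x := by
  simp [ratDot, mul_sum, mul_assoc]

@[fun_prop]
lemma continuous_ratDot (a : α → ℚ) : Continuous (ratDot a) := by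
  unfold ratDot
  fun_prop

lemma ratDot_snoc {d : ℕ} (a : Fin (d + 1) → ℚ) (x : Fin d → ℝ) (y : ℝ) :
    ratDot a (Fin.snoc x y) = ratDot (Fin.init a) x + a (Fin.last d) * y := by
  simp [ratDot, Fin.sum_univ_castSucc, Fin.init]

end RatDot

lemma Fin.exists_snoc_iff {n : ℕ} {β : Type*} {P : (Fin (n + 1) → β) → Prop} :
    (∃ x, P x) ↔ ∃ x y, P (Fin.snoc x y) :=
  ⟨fun ⟨x, hx⟩ => ⟨Fin.init x, x (Fin.last n), by rwa [Fin.snoc_init_self]⟩,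
    fun ⟨_, _, h⟩ => ⟨_, h⟩⟩

theorem exists_ratDot_system_iff (m n : ℕ) {ι : Type} [Fintype ι] (a : ι → Fin m → ℚ)
    (b : ι → Fin n → ℚ) (s : ι → Bool) :
    ∃ (κ : Type) (_ : Fintype κ) (w : κ → Fin n → ℚ) (t : κ → Bool), ∀ u,
      (∃ lam, ∀ i, Ineq (s i) (ratDot (a i) lam + ratDot (b i) u)) ↔
        ∀ k, Ineq (t k) (ratDot (w k) u) := by
  induction m generalizing ι with
  | zero => exact ⟨ι, inferInstance, b, s, fun u => by simp [ratDot]⟩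
  | succ m ih =>
    classical
    set c : ι → ℚ := fun i => a i (Fin.last m)
    obtain ⟨κ, _, w, t, h⟩ := ih (ι := {i // c i = 0} ⊕ {p : ι × ι // c p.1 < 0 ∧ 0 < c p.2})
      (Sum.elim (fun i => Fin.init (a i))
        fun p => c p.1.2 • Fin.init (a p.1.1) - c p.1.1 • Fin.init (a p.1.2))
      (Sum.elim (fun i => b i) fun p => c p.1.2 • b p.1.1 - c p.1.1 • b p.1.2)
      (Sum.elim (fun i => s i) fun p => s p.1.1 || s p.1.2)
    refine ⟨κ, inferInstance, w, t, fun u => ?_⟩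
    rw [← h u, Fin.exists_snoc_iff]
    refine exists_congr fun lam => ?_
    simp only [ratDot_snoc, add_right_comm _ _ (ratDot (b _) u)]
    rw [exists_forall_ineq_iff]
    simp only [Sum.forall, Subtype.forall, Prod.forall, Sum.elim_inl, Sum.elim_inr, ratDot_sub,
      ratDot_smul, Rat.cast_eq_zero, Rat.cast_lt_zero, Rat.cast_pos, and_imp, mul_add,
      add_sub_add_comm, c]

section Polyhedron

variable {m n : ℕ}

def ratPolyhedron {ι : Type*} (φ : ι → Fin m → ℚ) (χ : ι → Fin n → ℚ) (u : Fin n → ℝ) :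
    Set (Fin m → ℝ) :=
  {lam | ∀ i, -ratDot (χ i) u ≤ ratDot (φ i) lam}

theorem exists_ineq_forall_ratPolyhedron_subset_halfspace {ι : Type} [Fintype ι]
    (φ : ι → Fin m → ℚ) (χ : ι → Fin n → ℚ) (f : Fin m → ℚ) (g : Fin n → ℚ) {v : Fin n → ℝ}
    (h : ∀ lam ∈ ratPolyhedron φ χ v, -ratDot g v ≤ ratDot f lam) :
    ∃ (w : Fin n → ℚ) (t : Bool), Ineq t (ratDot w v) ∧ ∀ u, Ineq t (ratDot w u) →
      ∀ lam ∈ ratPolyhedron φ χ u, -ratDot g u ≤ ratDot f lam := by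
  -- a point of the polyhedron violating the extra inequality is a solution of a mixed system
  obtain ⟨κ, _, w, t, hw⟩ := exists_ratDot_system_iff m n (ι := ι ⊕ Unit)
    (Sum.elim φ fun _ => -f) (Sum.elim χ fun _ => -g) (Sum.elim (fun _ => false) fun _ => true)
  have key : ∀ u, (∀ lam ∈ ratPolyhedron φ χ u, -ratDot g u ≤ ratDot f lam) ↔
      ∃ k, Ineq (!t k) (ratDot (-w k) u) := by
    intro u
    simp_rw [ratDot_neg, ← not_ineq, ← not_forall, ← hw u]
    simp only [not_exists, Sum.forall, Sum.elim_inl, Sum.elim_inr, Ineq.false_iff,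
      Ineq.true_iff, ratDot_neg, forall_const, not_and, not_lt]
    refine forall_congr' fun lam => imp_congr (forall_congr' fun i => ?_) ?_ <;>
      constructor <;> intro <;> linarith
  obtain ⟨k, hk⟩ := (key v).1 h
  exact ⟨-w k, !t k, hk, fun u hu => (key u).2 ⟨k, hu⟩⟩

theorem exists_ineq_forall_ratPolyhedron_subset {ι ι' : Type} [Fintype ι]
    (φ : ι → Fin m → ℚ) (χ : ι → Fin n → ℚ) (φ' : ι' → Fin m → ℚ) (χ' : ι' → Fin n → ℚ)
    {v : Fin n → ℝ} (h : ratPolyhedron φ χ v ⊆ ratPolyhedron φ' χ' v) :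
    ∃ (w : ι' → Fin n → ℚ) (t : ι' → Bool), (∀ i, Ineq (t i) (ratDot (w i) v)) ∧
      ∀ u, (∀ i, Ineq (t i) (ratDot (w i) u)) → ratPolyhedron φ χ u ⊆ ratPolyhedron φ' χ' u := by
  choose w t hv hsub using fun i =>
    exists_ineq_forall_ratPolyhedron_subset_halfspace φ χ (φ' i) (χ' i) fun lam hlam => h hlam i
  exact ⟨w, t, hv, fun u hu lam hlam i => hsub i u (hu i) lam hlam⟩

end Polyhedron

lemma ratCast_snoc {n : ℕ} (q : Fin n → ℚ) (r : ℚ) :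
    (fun j => ((Fin.snoc q r : Fin (n + 1) → ℚ) j : ℝ)) = Fin.snoc (fun j => (q j : ℝ)) (r : ℝ) :=
  Fin.comp_snoc _ _ _

theorem mem_closure_ratPoints_of_ratDot_eq_zero {n : ℕ} {ι : Type*} (c : ι → Fin n → ℚ)
    {v : Fin n → ℝ} (hv : ∀ i, ratDot (c i) v = 0) :
    v ∈ closure (Set.range (fun q : Fin n → ℚ => fun j => (q j : ℝ)) ∩
      {x | ∀ i, ratDot (c i) x = 0}) := by
  induction n with
  | zero => exact subset_closure ⟨⟨fun j => j.elim0, Subsingleton.elim _ _⟩, hv⟩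
  | succ n ih =>
    by_cases hpiv : ∃ i₀, c i₀ (Fin.last n) ≠ 0
    · obtain ⟨i₀, hd⟩ := hpiv
      set d := c i₀ (Fin.last n)
      -- solving the equation `i₀` for the last coordinate reduces to `n` variables
      set g : (Fin n → ℝ) → Fin (n + 1) → ℝ :=
        fun x => Fin.snoc x (-ratDot (Fin.init (c i₀)) x / d)
      set c' : ι → Fin n → ℚ := fun i => Fin.init (c i) - (c i (Fin.last n) / d) • Fin.init (c i₀)
      have hg : ∀ i x, ratDot (c i) (g x) = ratDot (c' i) x := fun i x => by
        simp only [g, c', ratDot_snoc, ratDot_sub, ratDot_smul, Rat.cast_div]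
        ring
      have hgv : g (Fin.init v) = v := by
        have hv₀ := hv i₀
        rw [← Fin.snoc_init_self v, ratDot_snoc] at hv₀
        have : (d : ℝ) ≠ 0 := Rat.cast_ne_zero.2 hd
        conv_rhs => rw [← Fin.snoc_init_self v]
        simp only [g]
        congr 1
        field_simp
        linarith
      rw [← hgv]
      refine map_mem_closure (by fun_prop) (ih c' fun i => by rw [← hg, hgv, hv]) ?_
      rintro _ ⟨⟨q, rfl⟩, hq⟩
      refine ⟨⟨Fin.snoc q (-(∑ j, Fin.init (c i₀) j * q j) / d), ?_⟩,
        fun i => (hg i _).trans (hq i)⟩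
      beta_reduce
      rw [ratCast_snoc]
      simp [g, ratDot]
    · push Not at hpiv
      have hc : ∀ i x y, ratDot (c i) (Fin.snoc x y) = ratDot (Fin.init (c i)) x := by
        simp [ratDot_snoc, hpiv]
      rw [← Fin.snoc_init_self v]
      refine map_mem_closure₂ (by fun_prop) (ih (fun i => Fin.init (c i)) fun i => ?_)
        (Rat.denseRange_cast (v (Fin.last n))) ?_
      · rw [← hc _ _ (v (Fin.last n)), Fin.snoc_init_self, hv]
      rintro _ ⟨⟨q, rfl⟩, hq⟩ _ ⟨r, rfl⟩
      exact ⟨⟨Fin.snoc q r, ratCast_snoc q r⟩, fun i => (hc i _ _).trans (hq i)⟩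

theorem exists_ratCast_mem_nhds_forall_ineq {n : ℕ} {τ : Type*} [Finite τ]
    (w : τ → Fin n → ℚ) (t : τ → Bool) {v : Fin n → ℝ} (hv : ∀ i, Ineq (t i) (ratDot (w i) v))
    {O : Set (Fin n → ℝ)} (hO : O ∈ 𝓝 v) :
    ∃ q : Fin n → ℚ, (fun j => (q j : ℝ)) ∈ O ∧
      ∀ i, Ineq (t i) (ratDot (w i) fun j => (q j : ℝ)) := by
  -- constraints strict at `v` persist nearby; the others are equalities at `v`
  have hpos : ∀ᶠ x in 𝓝 v, ∀ i, 0 < ratDot (w i) v → 0 < ratDot (w i) x := by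
    refine eventually_all.2 fun i => ?_
    by_cases h : 0 < ratDot (w i) v
    · exact (continuousAt_const.eventually_lt (continuous_ratDot _).continuousAt h).mono
        fun x hx _ => hx
    · exact Eventually.of_forall fun x h' => absurd h' h
  obtain ⟨_, ⟨hqO, hqpos⟩, ⟨q, rfl⟩, hq0⟩ := mem_closure_iff_nhds.1
    (mem_closure_ratPoints_of_ratDot_eq_zero (fun i : {i // ratDot (w i) v = 0} => w i)
      fun i => i.2) _ (inter_mem hO hpos)
  refine ⟨q, hqO, fun i => ?_⟩
  rcases (hv i).nonneg.eq_or_lt with h | h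
  · have hti := hv i
    rw [← h, Ineq.zero_iff] at hti
    rw [hti, hq0 ⟨i, h.symm⟩]
    exact le_rfl
  · exact Ineq.of_pos (hqpos i h)

theorem stmt_1_general (n m k₁ k₂ : ℕ)
    (φ1 : Fin k₁ → Fin m → ℚ) (χ1 : Fin k₁ → Fin n → ℚ)
    (φ2 : Fin k₂ → Fin m → ℚ) (χ2 : Fin k₂ → Fin n → ℚ)
    (v : Fin n → ℝ)
    (hEq : {lam : Fin m → ℝ | ∀ i, -(∑ j, (χ1 i j : ℝ) * v j) ≤ ∑ j, (φ1 i j : ℝ) * lam j}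
         = {lam : Fin m → ℝ | ∀ i, -(∑ j, (χ2 i j : ℝ) * v j) ≤ ∑ j, (φ2 i j : ℝ) * lam j}) :
    ∀ O ∈ nhds v, ∃ v' : Fin n → ℚ, (fun j => (v' j : ℝ)) ∈ O ∧
      {lam : Fin m → ℝ | ∀ i, -(∑ j, (χ1 i j : ℝ) * (v' j : ℝ)) ≤ ∑ j, (φ1 i j : ℝ) * lam j}
      = {lam : Fin m → ℝ | ∀ i, -(∑ j, (χ2 i j : ℝ) * (v' j : ℝ)) ≤ ∑ j, (φ2 i j : ℝ) * lam j} := by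
  intro O hO
  change ratPolyhedron φ1 χ1 v = ratPolyhedron φ2 χ2 v at hEq
  obtain ⟨w₁, t₁, hv₁, h₁⟩ := exists_ineq_forall_ratPolyhedron_subset φ1 χ1 φ2 χ2 hEq.le
  obtain ⟨w₂, t₂, hv₂, h₂⟩ := exists_ineq_forall_ratPolyhedron_subset φ2 χ2 φ1 χ1 hEq.ge
  obtain ⟨q, hqO, hq⟩ := exists_ratCast_mem_nhds_forall_ineq (Sum.elim w₁ w₂) (Sum.elim t₁ t₂)
    (Sum.forall.2 ⟨hv₁, hv₂⟩) hO
  exact ⟨q, hqO, (h₁ _ fun i => hq (.inl i)).antisymm (h₂ _ fun i => hq (.inr i))⟩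

/-- Lemma 8.7: if two families of rational polyhedra, parameterized linearly by `v`,
coincide at some real parameter `v` where they form a full-dimensional polytope, then they
coincide at rational parameters arbitrarily close to `v`. -/
theorem stmt_1 (n m k₁ k₂ : ℕ)
    (φ1 : Fin k₁ → Fin m → ℚ) (χ1 : Fin k₁ → Fin n → ℚ)
    (φ2 : Fin k₂ → Fin m → ℚ) (χ2 : Fin k₂ → Fin n → ℚ)
    (v : Fin n → ℝ)
    (hEq : {lam : Fin m → ℝ | ∀ i, -(∑ j, (χ1 i j : ℝ) * v j) ≤ ∑ j, (φ1 i j : ℝ) * lam j}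
         = {lam : Fin m → ℝ | ∀ i, -(∑ j, (χ2 i j : ℝ) * v j) ≤ ∑ j, (φ2 i j : ℝ) * lam j})
    (hBdd : Bornology.IsBounded
      {lam : Fin m → ℝ | ∀ i, -(∑ j, (χ1 i j : ℝ) * v j) ≤ ∑ j, (φ1 i j : ℝ) * lam j})
    (hFull : (interior
      {lam : Fin m → ℝ | ∀ i, -(∑ j, (χ1 i j : ℝ) * v j) ≤ ∑ j, (φ1 i j : ℝ) * lam j}).Nonempty) :
    ∀ O ∈ nhds v, ∃ v' : Fin n → ℚ, (fun j => (v' j : ℝ)) ∈ O ∧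
      {lam : Fin m → ℝ | ∀ i, -(∑ j, (χ1 i j : ℝ) * (v' j : ℝ)) ≤ ∑ j, (φ1 i j : ℝ) * lam j}
      = {lam : Fin m → ℝ | ∀ i, -(∑ j, (χ2 i j : ℝ) * (v' j : ℝ)) ≤ ∑ j, (φ2 i j : ℝ) * lam j} :=
  stmt_1_general n m k₁ k₂ φ1 χ1 φ2 χ2 v hEq
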